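/- arXiv:1403.5998 — 2 statements merged into one kernel-verified Lean document; each statement's English description precedes it below -/
import Mathlib

section
/- Q_p(ξ) = Q_p(ζ_p), where ξ^(p-1) = -p and ζ_p is a primitive p-th root of unity; that is, the field obtained by adjoining a root of X^(p-1)+p to Q_p equals the p-th cyclotomic extension of Q_p. -/
/-!
Let `ζ` be a root of `Φ_p` and `π = 1 - ζ`. Evaluating `Φ_p = ∏ (X - ζ^i)` at `1` gives
`p = π^(p-1) u` with `u = ∏_{i < p-1} (1 + ζ + ⋯ + ζ^i)` a unit, and `u ≡ (p-1)! ≡ -1 mod π`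
by Wilson's theorem. Hence `(-u)^p ≡ 1 mod p`, and Hensel's lemma in the `p`-adically complete
ring `ℤ_p[ζ]` produces `a` with `a^(p-1) = -u`, so that `ξ = π a` satisfies `ξ^(p-1) = -p`.
As `X^(p-1) + p` is Eisenstein, hence irreducible of the same degree as `Φ_p`, sending a root of
it to `ξ` is an isomorphism `ℚ_p(ξ) ≅ ℚ_p(ζ)`.
-/

open Polynomial Finset

theorem IsAdicComplete.of_finite {R M : Type*} [CommRing R] [IsNoetherianRing R] (I : Ideal R)
    [IsAdicComplete I R] [AddCommGroup M] [Module R M] [Module.Finite R M] :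
    IsAdicComplete I M where
  toIsHausdorff := .of_le_jacobson I M (IsAdicComplete.le_jacobson_bot I)
  toIsPrecomplete := by
    rw [← AdicCompletion.of_surjective_iff]
    intro y
    obtain ⟨t, rfl⟩ := AdicCompletion.ofTensorProduct_surjective_of_finite I M y
    induction t using TensorProduct.induction_on with
    | zero => exact ⟨0, by simp⟩
    | tmul r x =>
      obtain ⟨s, rfl⟩ := AdicCompletion.of_surjective I R r
      exact ⟨s • x, by rw [map_smul]; exact (algebraMap_smul (AdicCompletion I R) s _).symm⟩
    | add t t' ht ht' =>
      obtain ⟨x, hx⟩ := ht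
      obtain ⟨x', hx'⟩ := ht'
      exact ⟨x + x', by simp [hx, hx']⟩

theorem IsAdicComplete.map_algebraMap_of_finite {R S : Type*} [CommRing R] [CommRing S]
    [Algebra R S] [IsNoetherianRing R] (I : Ideal R) [IsAdicComplete I R] [Module.Finite R S] :
    IsAdicComplete (I.map (algebraMap R S)) S :=
  have := IsAdicComplete.of_finite I (M := S)
  { toIsHausdorff := IsHausdorff.map_algebraMap_iff.2 inferInstance
    toIsPrecomplete := IsPrecomplete.map_algebraMap_iff.2 inferInstance }

theorem PadicInt.isAdicComplete_span_p_of_finite {p : ℕ} [Fact p.Prime] (S : Type*) [CommRing S]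
    [Algebra ℤ_[p] S] [Module.Finite ℤ_[p] S] : IsAdicComplete (Ideal.span {(p : S)}) S := by
  have := IsAdicComplete.map_algebraMap_of_finite (S := S) (IsLocalRing.maximalIdeal ℤ_[p])
  rwa [maximalIdeal_eq_span_p, Ideal.map_span, Set.image_singleton, map_natCast] at this

section Henselian

variable {R : Type*} [CommRing R] {p : ℕ}

theorem pow_prime_sub_one_mem_span_of_dvd_sub_one (hp : p.Prime) {π v : R}
    (hπ : π ^ p ∈ Ideal.span {(p : R)}) (hv : π ∣ v - 1) :
    v ^ p - 1 ∈ Ideal.span {(p : R)} := by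
  obtain ⟨x, hx⟩ := hv
  obtain ⟨r, hr⟩ := exists_add_pow_prime_eq hp 1 (π * x)
  rw [sub_eq_iff_eq_add'.1 hx, hr, one_pow, mul_pow, add_assoc, add_sub_cancel_left]
  exact Ideal.add_mem _ (Ideal.mul_mem_right _ _ hπ) (Ideal.mul_mem_right _ _
    (Ideal.mul_mem_right _ _ (Ideal.mul_mem_right _ _ (Ideal.mem_span_singleton_self _))))

theorem exists_pow_pred_eq_of_pow_sub_one_mem [HenselianRing R (Ideal.span {(p : R)})]
    (hp : p.Prime) {v : R} (hv : v ^ p - 1 ∈ Ideal.span {(p : R)}) :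
    ∃ a : R, a ^ (p - 1) = v := by
  set I := Ideal.span {(p : R)}
  have hp2 := hp.two_le
  have hmk_p : Ideal.Quotient.mk I p = 0 :=
    Ideal.Quotient.eq_zero_iff_mem.2 (Ideal.mem_span_singleton_self _)
  have hmk_v : Ideal.Quotient.mk I v ^ p = 1 := by
    rw [← map_pow, ← sub_eq_zero, ← map_one (Ideal.Quotient.mk I), ← map_sub]
    exact Ideal.Quotient.eq_zero_iff_mem.2 hv
  -- `v ^ (p - 1)` is an approximate root of `X ^ (p - 1) - v` because `v ^ p ≡ 1`.
  have hexp : (p - 1) * (p - 1) = p * (p - 2) + 1 := by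
    obtain ⟨q, rfl⟩ : ∃ q, p = q + 2 := ⟨p - 2, by omega⟩
    rw [show q + 2 - 1 = q + 1 by omega, Nat.add_sub_cancel]
    ring
  have happrox : (X ^ (p - 1) - C v).eval (v ^ (p - 1)) ∈ I := by
    rw [← Ideal.Quotient.eq_zero_iff_mem]
    simp only [eval_sub, eval_pow, eval_X, eval_C, map_sub, map_pow]
    rw [← pow_mul, hexp, pow_add, pow_mul, hmk_v, one_pow, one_mul, pow_one, sub_self]
  have hderiv :
      IsUnit (Ideal.Quotient.mk I ((X ^ (p - 1) - C v).derivative.eval (v ^ (p - 1)))) := by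
    have hunit : IsUnit (Ideal.Quotient.mk I v) := IsUnit.of_pow_eq_one hmk_v hp.ne_zero
    have hcast : ((p - 1 : ℕ) : R ⧸ I) = -1 := by
      rw [Nat.cast_sub hp.one_le, Nat.cast_one, ← map_natCast (Ideal.Quotient.mk I), hmk_p,
        zero_sub]
    simp only [derivative_sub, derivative_X_pow, derivative_C, sub_zero, eval_mul, eval_natCast,
      eval_pow, eval_X, map_mul, map_pow, map_natCast, hcast]
    exact isUnit_one.neg.mul ((hunit.pow _).pow _)
  obtain ⟨a, ha, -⟩ := HenselianRing.is_henselian (I := I) _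
    (monic_X_pow_sub_C v (by omega)) _ happrox hderiv
  exact ⟨a, sub_eq_zero.1 (by simpa using ha)⟩

theorem exists_pow_pred_eq_neg_natCast [HenselianRing R (Ideal.span {(p : R)})] (hp : p.Prime)
    {π u : R} (hu : IsUnit u) (hpu : (p : R) = π ^ (p - 1) * u) (hπu : π ∣ u + 1) :
    ∃ ξ : R, ξ ^ (p - 1) = -p := by
  have hπp : π ^ p ∈ Ideal.span {(p : R)} := by
    refine Ideal.mem_span_singleton.2 ⟨π * hu.unit⁻¹, ?_⟩
    rw [← Nat.sub_add_cancel hp.one_le, pow_succ, Nat.sub_add_cancel hp.one_le, hpu]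
    linear_combination (-(π ^ (p - 1) * π)) * hu.mul_val_inv
  have hv : π ∣ -u - 1 := by simpa [sub_eq_add_neg, add_comm] using hπu.neg_right
  obtain ⟨a, ha⟩ := exists_pow_pred_eq_of_pow_sub_one_mem hp
    (pow_prime_sub_one_mem_span_of_dvd_sub_one hp hπp hv)
  exact ⟨π * a, by rw [mul_pow, ha, hpu]; ring⟩

end Henselian

theorem one_sub_dvd_prod_geom_sum_add_one {A : Type*} [CommRing A] {p : ℕ} (hp : p.Prime)
    {ζ : A} (hζp : 1 - ζ ∣ (p : A)) :
    1 - ζ ∣ ∏ i ∈ range (p - 1), ∑ j ∈ range (i + 1), ζ ^ j + 1 := by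
  obtain ⟨k, hk⟩ : p ∣ (p - 1).factorial + 1 := by
    have := Fact.mk hp
    rw [← ZMod.natCast_eq_zero_iff, Nat.cast_add, ZMod.wilsons_lemma, Nat.cast_one,
      neg_add_cancel]
  set mk := Ideal.Quotient.mk (Ideal.span {1 - ζ})
  have hζ : mk ζ = 1 := (Ideal.Quotient.eq.2 (Ideal.mem_span_singleton_self _)).symm
  have hp0 : mk p = 0 := Ideal.Quotient.eq_zero_iff_mem.2 (Ideal.mem_span_singleton.2 hζp)
  rw [← Ideal.mem_span_singleton, ← Ideal.Quotient.eq_zero_iff_mem]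
  calc mk (∏ i ∈ range (p - 1), ∑ j ∈ range (i + 1), ζ ^ j + 1)
      = (((p - 1).factorial + 1 : ℕ) : A ⧸ Ideal.span {1 - ζ}) := by
        simp [map_prod, map_sum, hζ, ← prod_range_add_one_eq_factorial]
    _ = 0 := by rw [hk, Nat.cast_mul, ← map_natCast mk, hp0, zero_mul]

namespace IsPrimitiveRoot

variable {A : Type*} [CommRing A] [IsDomain A] {n : ℕ} {ζ : A}

theorem prod_one_sub_pow_succ (hζ : IsPrimitiveRoot ζ n) (hn : 0 < n) :
    ∏ i ∈ range (n - 1), (1 - ζ ^ (i + 1)) = n := by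
  obtain ⟨m, rfl⟩ : ∃ m, n = m + 1 := ⟨n - 1, by omega⟩
  have hprod := X_pow_sub_C_eq_prod hζ hn (one_pow (m + 1))
  rw [prod_range_succ', pow_zero, one_mul, map_one, ← geom_sum_mul, ← map_one C] at hprod
  simp only [mul_one] at hprod
  have hgeom := mul_right_cancel₀ (X_sub_C_ne_zero 1) hprod
  simpa [eval_prod] using (congrArg (eval 1) hgeom).symm

theorem natCast_eq_one_sub_pow_mul_prod_geom_sum (hζ : IsPrimitiveRoot ζ n) (hn : 0 < n) :
    (n : A) = (1 - ζ) ^ (n - 1) * ∏ i ∈ range (n - 1), ∑ j ∈ range (i + 1), ζ ^ j := by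
  rw [← hζ.prod_one_sub_pow_succ hn, ← prod_congr rfl fun i _ => mul_neg_geom_sum ζ (i + 1),
    prod_mul_distrib, prod_const, card_range]

theorem isUnit_prod_geom_sum {p : ℕ} (hζ : IsPrimitiveRoot ζ p) (hp : p.Prime) :
    IsUnit (∏ i ∈ range (p - 1), ∑ j ∈ range (i + 1), ζ ^ j) :=
  IsUnit.prod_iff.2 fun i hi => hζ.geom_sum_isUnit hp.two_le
    (Nat.coprime_of_lt_prime i.succ_ne_zero (by simp at hi; omega) hp).symm

theorem exists_natCast_eq_pow_mul_unit {p : ℕ} (hζ : IsPrimitiveRoot ζ p) (hp : p.Prime) :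
    ∃ π u : A, IsUnit u ∧ (p : A) = π ^ (p - 1) * u ∧ π ∣ u + 1 := by
  have hζp : 1 - ζ ∣ (p : A) := by
    rw [← neg_sub]
    exact neg_dvd.2 (hζ.sub_one_dvd_natCast hp.one_lt)
  exact ⟨1 - ζ, _, hζ.isUnit_prod_geom_sum hp, hζ.natCast_eq_one_sub_pow_mul_prod_geom_sum hp.pos,
    one_sub_dvd_prod_geom_sum_add_one hp hζp⟩

end IsPrimitiveRoot

-- `S` need not be a domain: the factorisation is found in the domain `ℤ[X] ⧸ (Φ_p)` and pushed
-- forward along `X ↦ ζ`.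
theorem exists_natCast_eq_pow_mul_unit_of_isRoot_cyclotomic {S : Type*} [CommRing S] {p : ℕ}
    (hp : p.Prime) {ζ : S} (hζ : (cyclotomic p S).IsRoot ζ) :
    ∃ π u : S, IsUnit u ∧ (p : S) = π ^ (p - 1) * u ∧ π ∣ u + 1 := by
  have : IsDomain (AdjoinRoot (cyclotomic p ℤ)) :=
    AdjoinRoot.isDomain_of_prime (cyclotomic.irreducible hp.pos).prime
  have : NeZero (p : AdjoinRoot (cyclotomic p ℤ)) := ⟨by
    rw [← map_natCast (AdjoinRoot.of (cyclotomic p ℤ)), map_ne_zero_iff _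
      (AdjoinRoot.of.injective_of_degree_ne_zero (by simp [degree_cyclotomic, hp.ne_zero]))]
    exact_mod_cast hp.ne_zero⟩
  have hroot : IsPrimitiveRoot (AdjoinRoot.root (cyclotomic p ℤ)) p := by
    rw [← isRoot_cyclotomic_iff, ← map_cyclotomic p (AdjoinRoot.of (cyclotomic p ℤ))]
    exact AdjoinRoot.isRoot_root _
  obtain ⟨π, u, hu, hpu, hπu⟩ := hroot.exists_natCast_eq_pow_mul_unit hp
  let φ := AdjoinRoot.lift (Int.castRingHom S) ζ (by rwa [eval₂_eq_eval_map, map_cyclotomic])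
  refine ⟨φ π, φ u, hu.map φ, by rw [← map_natCast φ, hpu, map_mul, map_pow], ?_⟩
  simpa using map_dvd φ hπu

theorem PadicInt.exists_pow_pred_eq_neg_of_isRoot_cyclotomic {p : ℕ} [Fact p.Prime]
    {S : Type*} [CommRing S] [Algebra ℤ_[p] S] [Module.Finite ℤ_[p] S] {ζ : S}
    (hζ : (cyclotomic p S).IsRoot ζ) : ∃ ξ : S, ξ ^ (p - 1) = -p := by
  have := isAdicComplete_span_p_of_finite (p := p) S
  obtain ⟨π, u, hu, hpu, hπu⟩ := exists_natCast_eq_pow_mul_unit_of_isRoot_cyclotomic Fact.out hζ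
  exact exists_pow_pred_eq_neg_natCast Fact.out hu hpu hπu

theorem irreducible_X_pow_add_C_of_prime {R : Type*} [CommRing R] [IsDomain R] {π : R}
    (hπ : Prime π) {n : ℕ} (hn : n ≠ 0) : Irreducible (X ^ n + C π) := by
  have hP : (Ideal.span {π}).IsPrime := (Ideal.span_singleton_prime hπ.ne_zero).2 hπ
  have hmonic := monic_X_pow_add_C π hn
  refine (hmonic.isEisensteinAt_of_mem_of_notMem hP.ne_top (fun {i} hi => ?_) ?_).irreducible hP
    hmonic.isPrimitive (by rw [natDegree_X_pow_add_C]; omega)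
  · rw [natDegree_X_pow_add_C] at hi
    rw [coeff_add, coeff_X_pow, if_neg hi.ne, coeff_C, zero_add]
    split_ifs
    exacts [Ideal.mem_span_singleton_self π, Ideal.zero_mem _]
  · rw [coeff_add, coeff_X_pow, if_neg (Ne.symm hn), coeff_C_zero, zero_add,
      Ideal.span_singleton_pow, Ideal.mem_span_singleton, pow_two]
    intro h
    exact hπ.not_isUnit (isUnit_of_dvd_one
      ((mul_dvd_mul_iff_left hπ.ne_zero).1 (by simpa using h)))

theorem irreducible_X_pow_add_C_algebraMap_of_prime {R K : Type*} [CommRing R] [IsDomain R]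
    [IsIntegrallyClosed R] [Field K] [Algebra R K] [IsFractionRing R K] {π : R} (hπ : Prime π)
    {n : ℕ} (hn : n ≠ 0) : Irreducible (X ^ n + C (algebraMap R K π)) := by
  simpa using ((monic_X_pow_add_C π hn).irreducible_iff_irreducible_map_fraction_map (K := K)).1
    (irreducible_X_pow_add_C_of_prime hπ hn)

theorem AdjoinRoot.nonempty_algEquiv_of_aeval_eq_zero {F : Type*} [Field F] {f g : F[X]}
    (hf : Irreducible f) (hfg : f.natDegree = g.natDegree) {x : AdjoinRoot g}
    (hx : aeval x f = 0) : Nonempty (AdjoinRoot f ≃ₐ[F] AdjoinRoot g) := by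
  have := Fact.mk hf
  have hg : 0 < g.natDegree := hfg ▸ hf.natDegree_pos
  have hg0 : g ≠ 0 := ne_zero_of_natDegree_gt hg
  have : Nontrivial (AdjoinRoot g) := AdjoinRoot.nontrivial g (by
    rw [degree_eq_natDegree hg0]; exact_mod_cast hg.ne')
  have := (powerBasis hf.ne_zero).finite
  have := (powerBasis hg0).finite
  let φ := liftAlgHom f (Algebra.ofId F _) x hx
  have hinj : Function.Injective φ := φ.toRingHom.injective
  have hrank : Module.finrank F (AdjoinRoot f) = Module.finrank F (AdjoinRoot g) := by
    rw [(powerBasis hf.ne_zero).finrank, (powerBasis hg0).finrank, powerBasis_dim,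
      powerBasis_dim, hfg]
  exact ⟨.ofBijective φ ⟨hinj,
    (LinearMap.injective_iff_surjective_of_finrank_eq_finrank (f := φ.toLinearMap) hrank).1 hinj⟩⟩

theorem stmt_2_general (p : ℕ) [Fact p.Prime] :
    Nonempty
      (AdjoinRoot ((X : Polynomial ℚ_[p]) ^ (p - 1) + C (p : ℚ_[p])) ≃ₐ[ℚ_[p]]
        AdjoinRoot (Polynomial.cyclotomic p ℚ_[p])) := by
  have hp : p.Prime := Fact.out
  have := (cyclotomic.monic p ℤ_[p]).finite_adjoinRoot
  obtain ⟨ξ, hξ⟩ := PadicInt.exists_pow_pred_eq_neg_of_isRoot_cyclotomic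
    (by simpa using AdjoinRoot.isRoot_root (cyclotomic p ℤ_[p]))
  let φ := AdjoinRoot.map (algebraMap ℤ_[p] ℚ_[p]) (cyclotomic p ℤ_[p]) (cyclotomic p ℚ_[p])
    (by rw [map_cyclotomic])
  refine AdjoinRoot.nonempty_algEquiv_of_aeval_eq_zero (x := φ ξ) ?_ ?_ ?_
  · simpa using irreducible_X_pow_add_C_algebraMap_of_prime (K := ℚ_[p]) PadicInt.prime_p
      (Nat.sub_ne_zero_of_lt hp.one_lt)
  · rw [natDegree_X_pow_add_C, natDegree_cyclotomic, Nat.totient_prime hp]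
  · rw [map_add, map_pow, aeval_X, aeval_C, map_natCast, ← map_pow, hξ, map_neg, map_natCast,
      neg_add_cancel]

/-- `ℚ_p(ξ) = ℚ_p(ζ_p)` for `p` odd: the field obtained by adjoining
a root of `X^(p-1) + p` to `ℚ_p` is isomorphic, as a `ℚ_p`-algebra, to the `p`-th
cyclotomic extension of `ℚ_p` (obtained by adjoining a root of the `p`-th
cyclotomic polynomial). -/
theorem stmt_2 (p : ℕ) [Fact p.Prime] (hp : Odd p) :
    Nonempty
      (AdjoinRoot ((X : Polynomial ℚ_[p]) ^ (p - 1) + C (p : ℚ_[p])) ≃ₐ[ℚ_[p]]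
        AdjoinRoot (Polynomial.cyclotomic p ℚ_[p])) :=
  stmt_2_general p
end

section
/- The ring Z_p[u, w]/(pw + u^{p-1}) embeds into Z_p[ξ][v] (where ξ^{p-1} = -p) via u ↦ ξv, w ↦ v^{p-1}, and this map is an injective ring homomorphism whose image is the subring of invariants of the (Z/p)^×-action sending ξ ↦ χ(g)ξ, v ↦ χ(g)^{-1}v for a faithful character χ. -/
/-!
`B` is free over `ℤ_p` on the monomials `ξ^i v^n` with `i < p - 1`, and the relation
`u^(p-1) = -p w` shows that `A` is spanned by the `u^i w^j` with `i < p - 1`. The map sends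
`u^i w^j` to the basis vector `ξ^i v^(i + (p-1)j)`, and distinct such monomials go to distinct
basis vectors, so it is injective. Each `σ g` acts diagonally on the basis, by `χ(g)^(i-n)` on
`ξ^i v^n`; as `χ` is injective and `(ℤ/p)ˣ` is cyclic of order `p - 1`, the basis vectors
occurring in an invariant element all have `n ≡ i (mod p - 1)`, which says exactly that they
are images of monomials `u^i w^j`.
-/

open Polynomial

/-- `ℤ_p[ξ] = ℤ_p[X]/(X^(p-1)+p)`. -/
abbrev ZpXi (p : ℕ) [Fact p.Prime] : Type :=
  Polynomial ℤ_[p] ⧸ Ideal.span {(X : Polynomial ℤ_[p]) ^ (p - 1) + C (p : ℤ_[p])}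

/-- The class `ξ` of `X` in `ℤ_p[ξ]`. -/
noncomputable def xi (p : ℕ) [Fact p.Prime] : ZpXi p :=
  Ideal.Quotient.mk _ (X : Polynomial ℤ_[p])

/-- `B = ℤ_p[ξ][v]`. -/
abbrev Bring (p : ℕ) [Fact p.Prime] : Type := Polynomial (ZpXi p)

/-- `A = ℤ_p[u,w]/(pw + u^(p-1))`, with `u = X 0`, `w = X 1`. -/
abbrev Aring (p : ℕ) [Fact p.Prime] : Type :=
  MvPolynomial (Fin 2) ℤ_[p] ⧸
    Ideal.span {(p : MvPolynomial (Fin 2) ℤ_[p]) * MvPolynomial.X 1 +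
      (MvPolynomial.X 0) ^ (p - 1)}

theorem Module.Basis.eq_one_of_apply_eq_self {R M ι : Type*} [CommRing R] [NoZeroDivisors R]
    [AddCommGroup M] [Module R M] (b : Module.Basis ι R M) {f : M →ₗ[R] M} {μ : ι → R}
    (hf : ∀ i, f (b i) = μ i • b i) {x : M} (hx : f x = x) {i : ι} (hi : b.repr x i ≠ 0) :
    μ i = 1 := by
  have hcoord : (b.coord i).comp f = μ i • b.coord i := b.ext fun j => by
    rcases eq_or_ne j i with rfl | hji
    · simp [hf]
    · simp [hf, hji]
  have hxi : b.repr x i = μ i * b.repr x i := by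
    simpa [hx] using LinearMap.congr_fun hcoord x
  have : (μ i - 1) * b.repr x i = 0 := by rw [sub_mul, ← hxi]; ring
  exact sub_eq_zero.mp ((mul_eq_zero.mp this).resolve_right hi)

theorem Module.Basis.mem_of_forall_repr_ne_zero {R M ι : Type*} [Semiring R] [AddCommMonoid M]
    [Module R M] (b : Module.Basis ι R M) {S : Submodule R M} {x : M}
    (h : ∀ i, b.repr x i ≠ 0 → b i ∈ S) : x ∈ S :=
  Submodule.span_le.mpr (Set.image_subset_iff.mpr fun i hi => h i (Finsupp.mem_support_iff.mp hi))
    (b.mem_span_repr_support x)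

theorem ZMod.natCast_sub_one_dvd_of_forall_zpow_eq_one {p : ℕ} [Fact p.Prime] {G : Type*}
    [Group G] {χ : (ZMod p)ˣ →* G} (hχ : Function.Injective χ) {m : ℤ}
    (h : ∀ g, χ g ^ m = 1) : ((p - 1 : ℕ) : ℤ) ∣ m := by
  rw [← ZMod.card_units p, ← Nat.card_eq_fintype_card, ← IsCyclic.exponent_eq_card,
    Group.exponent_dvd_iff_forall_zpow_eq_one]
  exact fun g => hχ (by rw [map_zpow, h, map_one])

section

variable (p : ℕ) [Fact p.Prime]

theorem xi_pow_sub_one : xi p ^ (p - 1) = -p := by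
  have h : Ideal.Quotient.mk (Ideal.span {(X : ℤ_[p][X]) ^ (p - 1) + C (p : ℤ_[p])})
      ((X : ℤ_[p][X]) ^ (p - 1) + C (p : ℤ_[p])) = 0 :=
    Ideal.Quotient.eq_zero_iff_mem.mpr (Ideal.subset_span rfl)
  rw [map_add, map_pow, C_eq_natCast, map_natCast] at h
  exact eq_neg_of_add_eq_zero_left h

theorem monic_X_pow_sub_one_add_C : ((X : ℤ_[p][X]) ^ (p - 1) + C (p : ℤ_[p])).Monic :=
  monic_X_pow_add_C _ (Nat.sub_ne_zero_of_lt (Fact.out : p.Prime).one_lt)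

noncomputable def xiBasis : Module.Basis (Fin (p - 1)) ℤ_[p] (ZpXi p) :=
  (AdjoinRoot.powerBasis' (monic_X_pow_sub_one_add_C p)).basis.reindex
    (finCongr ((AdjoinRoot.powerBasis'_dim _).trans natDegree_X_pow_add_C))

theorem xiBasis_apply (i : Fin (p - 1)) : xiBasis p i = xi p ^ (i : ℕ) := by
  -- stated in `AdjoinRoot`: its module structure agrees with that of `ZpXi p` only up to
  -- unfolding, which blocks rewriting in the goal directly
  have : (AdjoinRoot.powerBasis' (monic_X_pow_sub_one_add_C p)).basis.reindex
      (finCongr ((AdjoinRoot.powerBasis'_dim _).trans natDegree_X_pow_add_C)) i =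
      AdjoinRoot.root _ ^ (i : ℕ) := by
    rw [Module.Basis.reindex_apply, PowerBasis.basis_eq_pow]
    simp
  exact this

noncomputable def Bring.basis : Module.Basis (Fin (p - 1) × ℕ) ℤ_[p] (Bring p) :=
  (xiBasis p).smulTower (Polynomial.basisMonomials (ZpXi p))

theorem Bring.basis_apply (i : Fin (p - 1)) (n : ℕ) :
    Bring.basis p (i, n) = C (xi p ^ (i : ℕ)) * X ^ n := by
  rw [Bring.basis, Module.Basis.smulTower_apply, xiBasis_apply, coe_basisMonomials,
    smul_monomial, smul_eq_mul, mul_one, C_mul_X_pow_eq_monomial]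

end

theorem Bring.apply_basis_of_smul {p : ℕ} [Fact p.Prime] {e : Bring p ≃ₐ[ℤ_[p]] Bring p}
    {c : ℤ_[p]ˣ} (he_xi : e (C (xi p)) = (c : ℤ_[p]) • C (xi p))
    (he_v : e X = ((c⁻¹ : ℤ_[p]ˣ) : ℤ_[p]) • X) (k : Fin (p - 1) × ℕ) :
    e (Bring.basis p k) = ((c ^ ((k.1 : ℤ) - k.2) : ℤ_[p]ˣ) : ℤ_[p]) • Bring.basis p k := by
  rw [Bring.basis_apply, map_mul, C_pow, map_pow, map_pow, he_xi, he_v, _root_.smul_pow,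
    _root_.smul_pow, smul_mul_smul_comm, zpow_sub, zpow_natCast, zpow_natCast, ← inv_pow,
    Units.val_mul, Units.val_pow_eq_pow_val, Units.val_pow_eq_pow_val]

namespace Aring

variable (p : ℕ) [Fact p.Prime]

noncomputable def u : Aring p := Ideal.Quotient.mk _ (MvPolynomial.X 0)

noncomputable def w : Aring p := Ideal.Quotient.mk _ (MvPolynomial.X 1)

theorem u_pow_sub_one : u p ^ (p - 1) = -(p * w p) := by
  have h : Ideal.Quotient.mk (Ideal.span {(p : MvPolynomial (Fin 2) ℤ_[p]) * MvPolynomial.X 1 +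
      (MvPolynomial.X 0) ^ (p - 1)}) ((p : MvPolynomial (Fin 2) ℤ_[p]) * MvPolynomial.X 1 +
      (MvPolynomial.X 0) ^ (p - 1)) = 0 :=
    Ideal.Quotient.eq_zero_iff_mem.mpr (Ideal.subset_span rfl)
  rw [map_add, map_mul, map_pow, map_natCast] at h
  exact eq_neg_of_add_eq_zero_right h

theorem u_pow_mul_w_pow_eq (i j : ℕ) : u p ^ i * w p ^ j =
    (-p : ℤ_[p]) ^ (i / (p - 1)) •
      (u p ^ (i % (p - 1)) * w p ^ (j + i / (p - 1))) := by
  conv_lhs => rw [← Nat.mod_add_div i (p - 1), pow_add, pow_mul, u_pow_sub_one]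
  rw [Algebra.smul_def (A := Aring p), map_pow, map_neg, map_natCast]
  ring

theorem span_u_pow_mul_w_pow :
    Submodule.span ℤ_[p]
      (Set.range fun k : Fin (p - 1) × ℕ => u p ^ (k.1 : ℕ) * w p ^ k.2) = ⊤ := by
  have hp : 0 < p - 1 := Nat.sub_pos_of_lt (Fact.out : p.Prime).one_lt
  have hmono : ∀ i j, u p ^ i * w p ^ j ∈ Submodule.span ℤ_[p]
      (Set.range fun k : Fin (p - 1) × ℕ => u p ^ (k.1 : ℕ) * w p ^ k.2) :=
    fun i j => u_pow_mul_w_pow_eq p i j ▸ Submodule.smul_mem _ _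
      (Submodule.subset_span ⟨(⟨i % (p - 1), Nat.mod_lt i hp⟩, j + i / (p - 1)), rfl⟩)
  rw [eq_top_iff]
  rintro a -
  obtain ⟨x, rfl⟩ := Ideal.Quotient.mk_surjective a
  induction x using MvPolynomial.induction_on' with
  | monomial m c =>
    rw [MvPolynomial.monomial_eq, Finsupp.prod_fintype _ _ fun _ => pow_zero _,
      Fin.prod_univ_two, map_mul,
      ← MvPolynomial.algebraMap_eq (R := ℤ_[p]) (σ := Fin 2), Ideal.Quotient.mk_algebraMap,
      ← Algebra.smul_def]
    exact Submodule.smul_mem _ c (hmono (m 0) (m 1))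
  | add x y hx hy =>
    rw [map_add]
    exact Submodule.add_mem _ hx hy

noncomputable def toBring : Aring p →ₐ[ℤ_[p]] Bring p :=
  Ideal.Quotient.liftₐ _ (MvPolynomial.aeval ![C (xi p) * X, X ^ (p - 1)]) fun a ha => by
    obtain ⟨c, rfl⟩ := Ideal.mem_span_singleton'.mp ha
    simp only [map_mul, map_add, map_pow, map_natCast, MvPolynomial.aeval_X,
      Matrix.cons_val_zero, Matrix.cons_val_one]
    rw [mul_pow (M := Bring p), ← C_pow, xi_pow_sub_one, map_neg,
      map_natCast (C : ZpXi p →+* Bring p)]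
    ring

theorem toBring_u : toBring p (u p) = C (xi p) * X :=
  MvPolynomial.aeval_X _ 0

theorem toBring_w : toBring p (w p) = X ^ (p - 1) :=
  MvPolynomial.aeval_X _ 1

theorem toBring_u_pow_mul_w_pow (i j : ℕ) :
    toBring p (u p ^ i * w p ^ j) = C (xi p ^ i) * X ^ (i + (p - 1) * j) := by
  rw [map_mul, map_pow, map_pow, toBring_u, toBring_w, mul_pow (M := Bring p), ← C_pow,
    ← pow_mul, pow_add]
  ring

theorem toBring_injective : Function.Injective (toBring p) := by
  have hp : 0 < p - 1 := Nat.sub_pos_of_lt (Fact.out : p.Prime).one_lt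
  have hindex : Function.Injective fun k : Fin (p - 1) × ℕ => (k.1, (k.1 : ℕ) + (p - 1) * k.2) :=
    fun k l hkl => by
      simp only [Prod.mk.injEq] at hkl
      exact Prod.ext hkl.1 (Nat.eq_of_mul_eq_mul_left hp (by omega))
  refine LinearMap.injective_of_linearIndependent (f := (toBring p).toLinearMap)
    (span_u_pow_mul_w_pow p) ?_
  have himage : (toBring p).toLinearMap ∘
      (fun k : Fin (p - 1) × ℕ => u p ^ (k.1 : ℕ) * w p ^ k.2) =
      Bring.basis p ∘ fun k => (k.1, (k.1 : ℕ) + (p - 1) * k.2) := by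
    ext1 k
    exact (toBring_u_pow_mul_w_pow p _ _).trans (Bring.basis_apply p _ _).symm
  rw [himage]
  exact (Bring.basis p).linearIndependent.comp _ hindex

variable {p}

theorem comp_toBring_of_smul {e : Bring p ≃ₐ[ℤ_[p]] Bring p} {c : ℤ_[p]ˣ}
    (he_xi : e (C (xi p)) = (c : ℤ_[p]) • C (xi p))
    (he_v : e X = ((c⁻¹ : ℤ_[p]ˣ) : ℤ_[p]) • X) (hc : c ^ (p - 1) = 1) :
    e.toAlgHom.comp (toBring p) = toBring p := by
  refine Ideal.Quotient.algHom_ext _ (MvPolynomial.algHom_ext fun i => ?_)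
  fin_cases i
  · change e (toBring p (u p)) = toBring p (u p)
    rw [toBring_u, map_mul, he_xi, he_v, smul_mul_smul_comm, ← Units.val_mul, mul_inv_cancel,
      Units.val_one, one_smul]
  · change e (toBring p (w p)) = toBring p (w p)
    rw [toBring_w, map_pow, he_v, _root_.smul_pow, ← Units.val_pow_eq_pow_val, inv_pow, hc,
      inv_one, Units.val_one, one_smul]

theorem basis_mem_range_toBring {i : Fin (p - 1)} {n : ℕ} (h : n ≡ i [MOD p - 1]) :
    Bring.basis p (i, n) ∈ (toBring p).range := by
  refine ⟨u p ^ (i : ℕ) * w p ^ (n / (p - 1)), ?_⟩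
  change toBring p _ = _
  rw [toBring_u_pow_mul_w_pow, Bring.basis_apply]
  congr 2
  rw [← Nat.mod_eq_of_lt i.isLt, ← h, Nat.mod_add_div]

theorem mem_range_toBring_of_forall_fixed {χ : (ZMod p)ˣ →* ℤ_[p]ˣ} (hχ : Function.Injective χ)
    {σ : (ZMod p)ˣ →* (Bring p ≃ₐ[ℤ_[p]] Bring p)}
    (hσξ : ∀ g, σ g (C (xi p)) = ((χ g : ℤ_[p]ˣ) : ℤ_[p]) • C (xi p))
    (hσv : ∀ g, σ g (X : Bring p) = (((χ g)⁻¹ : ℤ_[p]ˣ) : ℤ_[p]) • X)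
    {b : Bring p} (hb : ∀ g, σ g b = b) : b ∈ (toBring p).range := by
  refine (Bring.basis p).mem_of_forall_repr_ne_zero (S := Subalgebra.toSubmodule (toBring p).range)
    fun ⟨i, n⟩ hk => ?_
  have hfixed : ∀ g, χ g ^ ((i : ℤ) - n) = 1 := fun g => Units.ext <|
    (Bring.basis p).eq_one_of_apply_eq_self (f := (σ g).toLinearMap)
      (Bring.apply_basis_of_smul (hσξ g) (hσv g)) (hb g) hk
  exact basis_mem_range_toBring
    (Nat.modEq_iff_dvd.mpr (ZMod.natCast_sub_one_dvd_of_forall_zpow_eq_one hχ hfixed))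

end Aring

theorem stmt_6_general (p : ℕ) [Fact p.Prime]
    (χ : (ZMod p)ˣ →* ℤ_[p]ˣ)
    (hχ : ∀ g : (ZMod p)ˣ, PadicInt.toZMod ((χ g : ℤ_[p]ˣ) : ℤ_[p]) = (g : ZMod p))
    (σ : (ZMod p)ˣ →* (Bring p ≃ₐ[ℤ_[p]] Bring p))
    (hσξ : ∀ g : (ZMod p)ˣ, σ g (C (xi p)) = ((χ g : ℤ_[p]ˣ) : ℤ_[p]) • C (xi p))
    (hσv : ∀ g : (ZMod p)ˣ, σ g (X : Bring p) = (((χ g)⁻¹ : ℤ_[p]ˣ) : ℤ_[p]) • X) :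
    ∃ f : Aring p →ₐ[ℤ_[p]] Bring p,
      f (Ideal.Quotient.mk _ (MvPolynomial.X 0)) = C (xi p) * X ∧
      f (Ideal.Quotient.mk _ (MvPolynomial.X 1)) = (X : Bring p) ^ (p - 1) ∧
      Function.Injective f ∧
      ∀ b : Bring p, b ∈ f.range ↔ ∀ g : (ZMod p)ˣ, σ g b = b := by
  have hχ_injective : Function.Injective χ :=
    Function.Injective.of_comp (f := fun x : ℤ_[p]ˣ => PadicInt.toZMod (x : ℤ_[p])) <| by
      simpa only [Function.comp_def, hχ] using Units.val_injective
  have hχ_pow : ∀ g, χ g ^ (p - 1) = 1 := fun g => by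
    rw [← map_pow, ← ZMod.card_units p, pow_card_eq_one, map_one]
  refine ⟨Aring.toBring p, Aring.toBring_u p, Aring.toBring_w p, Aring.toBring_injective p,
    fun b => ⟨?_, Aring.mem_range_toBring_of_forall_fixed hχ_injective hσξ hσv⟩⟩
  rintro ⟨a, rfl⟩ g
  exact AlgHom.congr_fun (Aring.comp_toBring_of_smul (hσξ g) (hσv g) (hχ_pow g)) a

/-- `ℤ_p[u,w]/(pw + u^(p-1))` embeds into `ℤ_p[ξ][v]` via `u ↦ ξv`,
`w ↦ v^(p-1)`: this is an injective `ℤ_p`-algebra homomorphism whose image is the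
subring of invariants of the `(ℤ/p)ˣ`-action by `ℤ_p`-algebra automorphisms with
`ξ ↦ χ(g)ξ`, `v ↦ χ(g)⁻¹v`, for the faithful (Teichmüller) character
`χ : (ℤ/p)ˣ → ℤ_pˣ`. -/
theorem stmt_6 (p : ℕ) [Fact p.Prime] (hp : Odd p)
    (χ : (ZMod p)ˣ →* ℤ_[p]ˣ)
    (hχ : ∀ g : (ZMod p)ˣ, PadicInt.toZMod ((χ g : ℤ_[p]ˣ) : ℤ_[p]) = (g : ZMod p))
    (σ : (ZMod p)ˣ →* (Bring p ≃ₐ[ℤ_[p]] Bring p))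
    (hσξ : ∀ g : (ZMod p)ˣ, σ g (C (xi p)) = ((χ g : ℤ_[p]ˣ) : ℤ_[p]) • C (xi p))
    (hσv : ∀ g : (ZMod p)ˣ, σ g (X : Bring p) = (((χ g)⁻¹ : ℤ_[p]ˣ) : ℤ_[p]) • X) :
    ∃ f : Aring p →ₐ[ℤ_[p]] Bring p,
      f (Ideal.Quotient.mk _ (MvPolynomial.X 0)) = C (xi p) * X ∧
      f (Ideal.Quotient.mk _ (MvPolynomial.X 1)) = (X : Bring p) ^ (p - 1) ∧
      Function.Injective f ∧
      ∀ b : Bring p, b ∈ f.range ↔ ∀ g : (ZMod p)ˣ, σ g b = b :=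
  stmt_6_general p χ hχ σ hσξ hσv
end
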